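/- arXiv:1908.03713 — 4 statements merged into one kernel-verified Lean document; each statement's English description precedes it below -/
import Mathlib

section
/- Let A, B be real symmetric d×d matrices. Then ⟨Av,v⟩ > 0 for all nonzero v ∈ ℝ^d with ⟨Bv,v⟩ = 0 if and only if there exists x ∈ ℝ such that A + xB is positive definite. -/
/-!
Restricted to the unit sphere, the condition on `x` is `f v + x g v > 0`: a lower bound
`x > -f v / g v` where `g v > 0`, an upper bound where `g v < 0`, and nothing where `g v = 0`.
Near `{g = 0}` the hypothesis forces `f > 0`, so by compactness the largest lower bound is
attained and the `x` satisfying all lower bounds form an open ray; likewise for the upper bounds.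
Every lower bound is below every upper bound: for `g u > 0 > g w` the quadratic
`t ↦ g (t • u + w)` has roots `t₁ > 0 > t₂`, at which `f` is positive, and a positive combination
of these two values of `t ↦ f (t • u + w)` is `(t₁ - t₂) (f w - f u t₁ t₂)`, with
`t₁ t₂ = g w / g u`. So the two open rays cover the connected line `ℝ`, hence they meet.
-/

open Matrix

theorem exists_quadratic_roots_of_neg {p q r : ℝ} (hp : 0 < p) (hr : r < 0) :
    ∃ t₁ t₂, t₂ < 0 ∧ 0 < t₁ ∧ p * t₁ ^ 2 + q * t₁ + r = 0 ∧ p * t₂ ^ 2 + q * t₂ + r = 0 ∧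
      p * (t₁ * t₂) = r := by
  set s := √(q ^ 2 - 4 * p * r)
  have hs : s ^ 2 = q ^ 2 - 4 * p * r := Real.sq_sqrt (by nlinarith)
  have hqs : |q| < s := by
    rw [← Real.sqrt_sq_eq_abs]; exact Real.sqrt_lt_sqrt (sq_nonneg q) (by nlinarith)
  obtain ⟨hq₁, hq₂⟩ := abs_lt.1 hqs
  refine ⟨(-q + s) / (2 * p), (-q - s) / (2 * p), div_neg_of_neg_of_pos (by linarith) (by linarith),
    div_pos (by linarith) (by linarith), ?_, ?_, ?_⟩ <;> field_simp <;> linarith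

theorem mul_lt_mul_of_forall_roots_pos {p q r a b c : ℝ} (hp : 0 < p) (hr : r < 0)
    (H : ∀ t, p * t ^ 2 + q * t + r = 0 → 0 < a * t ^ 2 + b * t + c) : a * r < c * p := by
  obtain ⟨t₁, t₂, ht₂, ht₁, h₁, h₂, hvieta⟩ := exists_quadratic_roots_of_neg (q := q) hp hr
  have hcomb : 0 < (t₁ - t₂) * (c - a * (t₁ * t₂)) := by
    nlinarith [mul_pos (neg_pos.2 ht₂) (H t₁ h₁), mul_pos ht₁ (H t₂ h₂)]
  have := pos_of_mul_pos_right hcomb (by linarith)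
  rw [← hvieta]; nlinarith

section CompactSpace

open Set

variable {X : Type*} [TopologicalSpace X] [CompactSpace X] {f g : X → ℝ}

theorem exists_forall_neg_div_le (hf : Continuous f) (hg : Continuous g)
    (h0 : ∀ v, g v = 0 → 0 < f v) {u₀ : X} (hu₀ : 0 < g u₀) :
    ∃ u, 0 < g u ∧ ∀ v, 0 < g v → -f v / g v ≤ -f u / g u := by
  set c := -f u₀ / g u₀
  -- `h0` keeps `K` off `{g = 0}`, so it is a compact part of `{g > 0}`
  set K := {v | 0 ≤ g v ∧ c * g v ≤ -f v}
  have hK : IsCompact K :=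
    ((isClosed_le continuous_const hg).inter
      (isClosed_le (continuous_const.mul hg) hf.neg)).isCompact
  have hgK : ∀ v ∈ K, 0 < g v := fun v ⟨hv, hcv⟩ => hv.lt_of_ne fun h => by
    have := h0 v h.symm
    rw [← h] at hcv
    linarith
  have hu₀K : u₀ ∈ K := ⟨hu₀.le, (div_mul_cancel₀ _ hu₀.ne').le⟩
  obtain ⟨u, huK, hmax⟩ := hK.exists_isMaxOn ⟨u₀, hu₀K⟩
    (hf.neg.continuousOn.div hg.continuousOn fun v hv => (hgK v hv).ne')
  refine ⟨u, hgK u huK, fun v hv => ?_⟩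
  by_cases hvK : v ∈ K
  · exact hmax hvK
  · have : -f v / g v < c := (div_lt_iff₀ hv).2 (lt_of_not_ge fun h => hvK ⟨hv.le, h⟩)
    exact this.le.trans (hmax hu₀K)

theorem isOpen_and_nonempty_setOf_forall_pos_add_mul (hf : Continuous f) (hg : Continuous g)
    (h0 : ∀ v, g v = 0 → 0 < f v) :
    IsOpen {x : ℝ | ∀ v, 0 < g v → 0 < f v + x * g v} ∧
      {x : ℝ | ∀ v, 0 < g v → 0 < f v + x * g v}.Nonempty := by
  by_cases hpos : ∃ u₀, 0 < g u₀
  · obtain ⟨u₀, hu₀⟩ := hpos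
    obtain ⟨u, hu, hmax⟩ := exists_forall_neg_div_le hf hg h0 hu₀
    have : {x : ℝ | ∀ v, 0 < g v → 0 < f v + x * g v} = Ioi (-f u / g u) := by
      ext x
      simp only [mem_ofPred_eq, mem_Ioi]
      refine ⟨fun h => (div_lt_iff₀ hu).2 (by linarith [h u hu]), fun h v hv => ?_⟩
      have := (div_lt_iff₀ hv).1 ((hmax v hv).trans_lt h)
      linarith
    rw [this]
    exact ⟨isOpen_Ioi, nonempty_Ioi⟩
  · push Not at hpos
    have : {x : ℝ | ∀ v, 0 < g v → 0 < f v + x * g v} = univ :=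
      eq_univ_of_forall fun x v hv => absurd hv (not_lt.2 (hpos v))
    rw [this]
    exact ⟨isOpen_univ, univ_nonempty⟩

theorem exists_forall_pos_add_mul (hf : Continuous f) (hg : Continuous g)
    (h0 : ∀ v, g v = 0 → 0 < f v)
    (hsep : ∀ u w, 0 < g u → g w < 0 → f u * g w < f w * g u) :
    ∃ x : ℝ, ∀ v, 0 < f v + x * g v := by
  obtain ⟨hopenPos, hnePos⟩ := isOpen_and_nonempty_setOf_forall_pos_add_mul hf hg h0
  obtain ⟨hopenNeg, hneNeg⟩ :=
    isOpen_and_nonempty_setOf_forall_pos_add_mul hf hg.neg (by simpa using h0)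
  have hcover : univ ⊆ {x : ℝ | ∀ v, 0 < g v → 0 < f v + x * g v} ∪
      Neg.neg ⁻¹' {x : ℝ | ∀ v, 0 < -g v → 0 < f v + x * -g v} := by
    intro x _
    by_contra! h
    simp only [mem_union, mem_ofPred_eq, mem_preimage, not_or, not_forall, not_lt] at h
    obtain ⟨⟨u, hu, hfu⟩, ⟨w, hw, hfw⟩⟩ := h
    nlinarith [hsep u w hu (by linarith), mul_nonpos_of_nonneg_of_nonpos hw.le hfu,
      mul_nonpos_of_nonneg_of_nonpos hu.le hfw]
  obtain ⟨x, -, hxPos, hxNeg⟩ :=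
    isPreconnected_univ _ _ hopenPos (hopenNeg.preimage continuous_neg) hcover
      ⟨_, trivial, hnePos.some_mem⟩ ⟨-hneNeg.some, trivial, by simpa using hneNeg.some_mem⟩
  refine ⟨x, fun v => ?_⟩
  rcases lt_trichotomy (g v) 0 with h | h | h
  · simpa using hxNeg v (by simpa using h)
  · simpa [h] using h0 v h
  · exact hxPos v h

end CompactSpace

namespace QuadraticMap

section Module

variable {E : Type*} [AddCommGroup E] [Module ℝ E]

theorem apply_smul_add (Q : QuadraticForm ℝ E) (t : ℝ) (u w : E) :
    Q (t • u + w) = Q u * t ^ 2 + polar Q u w * t + Q w := by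
  have h := polar_smul_left (Q := Q) t u w
  simp only [polar, QuadraticMap.map_smul, smul_eq_mul] at h ⊢
  linear_combination h

theorem mul_lt_mul_of_pos_of_neg (f g : QuadraticForm ℝ E)
    (H : ∀ v, v ≠ 0 → g v = 0 → 0 < f v) {u w : E} (hu : 0 < g u) (hw : g w < 0) :
    f u * g w < f w * g u := by
  refine mul_lt_mul_of_forall_roots_pos (q := polar g u w) (b := polar f u w) hu hw
    fun t ht => ?_
  rw [← apply_smul_add] at ht ⊢
  refine H _ (fun h => ?_) ht
  rw [eq_neg_of_add_eq_zero_right h, QuadraticMap.map_neg, QuadraticMap.map_smul,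
    smul_eq_mul] at hw
  nlinarith [mul_self_nonneg t]

end Module

section NormedSpace

variable {E : Type*} [NormedAddCommGroup E] [NormedSpace ℝ E]

theorem continuous_of_finiteDimensional [FiniteDimensional ℝ E] (Q : QuadraticForm ℝ E) :
    Continuous Q := by
  let B : E →ₗ[ℝ] E →L[ℝ] ℝ :=
    (LinearMap.toContinuousLinearMap : (E →ₗ[ℝ] ℝ) ≃ₗ[ℝ] E →L[ℝ] ℝ).toLinearMap ∘ₗ polarBilin Q
  have hB : Continuous fun x => B x x :=
    (LinearMap.continuous_of_finiteDimensional B).clm_apply continuous_id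
  convert hB.div_const 2 using 1
  ext x
  simp [B, polar_self]

theorem posDef_of_forall_mem_sphere (Q : QuadraticForm ℝ E)
    (h : ∀ v ∈ Metric.sphere (0 : E) 1, 0 < Q v) : Q.PosDef := by
  intro v hv
  have hnorm : 0 < ‖v‖ := norm_pos_iff.2 hv
  have := h (‖v‖⁻¹ • v) (by simp [norm_smul, hnorm.ne'])
  rw [← smul_inv_smul₀ hnorm.ne' v, QuadraticMap.map_smul, smul_eq_mul]
  positivity

theorem exists_posDef_add_smul_iff [FiniteDimensional ℝ E] (f g : QuadraticForm ℝ E) :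
    (∃ x : ℝ, (f + x • g).PosDef) ↔ ∀ v, v ≠ 0 → g v = 0 → 0 < f v := by
  refine ⟨fun ⟨x, hx⟩ v hv hgv => by simpa [hgv] using hx v hv, fun H => ?_⟩
  have hne : ∀ v : Metric.sphere (0 : E) 1, (v : E) ≠ 0 := fun v => ne_zero_of_mem_unit_sphere v
  obtain ⟨x, hx⟩ := exists_forall_pos_add_mul (f := fun v : Metric.sphere (0 : E) 1 => f v)
    (g := fun v => g v) (f.continuous_of_finiteDimensional.comp continuous_subtype_val)
    (g.continuous_of_finiteDimensional.comp continuous_subtype_val) (fun v => H v (hne v))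
    (fun u w => mul_lt_mul_of_pos_of_neg f g H)
  exact ⟨x, posDef_of_forall_mem_sphere _ fun v hv => by simpa using hx ⟨v, hv⟩⟩

end NormedSpace

end QuadraticMap

namespace Matrix

variable {n R : Type*} [Fintype n] [DecidableEq n] [CommRing R]

theorem toQuadraticForm'_apply (M : Matrix n n R) (v : n → R) :
    M.toQuadraticForm' v = M *ᵥ v ⬝ᵥ v := by
  simp [toQuadraticForm', toLinearMap₂'_apply', dotProduct_comm]

theorem toQuadraticForm'_add (M N : Matrix n n R) :
    (M + N).toQuadraticForm' = M.toQuadraticForm' + N.toQuadraticForm' := by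
  ext v
  simp [toQuadraticForm'_apply, add_mulVec]

theorem toQuadraticForm'_smul (c : R) (M : Matrix n n R) :
    (c • M).toQuadraticForm' = c • M.toQuadraticForm' := by
  ext v
  simp [toQuadraticForm'_apply, smul_mulVec]

end Matrix

/-- **Finsler's lemma, strict version.** For real symmetric `d × d` matrices `A`, `B`:
`⟨Av, v⟩ > 0` for all nonzero `v` with `⟨Bv, v⟩ = 0` iff there is `x ∈ ℝ` such
that `A + x B` is positive definite. -/
theorem finsler_lemma_strict (d : ℕ) (A B : Matrix (Fin d) (Fin d) ℝ)
    (hA : A.IsSymm) (hB : B.IsSymm) :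
    (∀ v : Fin d → ℝ, v ≠ 0 → B.mulVec v ⬝ᵥ v = 0 → 0 < A.mulVec v ⬝ᵥ v) ↔
      ∃ x : ℝ, (A + x • B).PosDef := by
  simp only [← toQuadraticForm'_apply]
  rw [← QuadraticMap.exists_posDef_add_smul_iff]
  refine exists_congr fun x => ?_
  rw [← toQuadraticForm'_smul, ← toQuadraticForm'_add]
  exact ⟨.of_toQuadraticForm' (hA.add (hB.smul x)), PosDef.toQuadraticForm'⟩
end

section
/- Every spectrahedron S ⊂ ℝ^n with nonempty interior is an algebraic interior; moreover, if d is minimal among semidefinite representations S = {x : A + Σ xᵢBᵢ ⪰ 0} with A, Bᵢ ∈ Sym²(ℝ^d), then A + Σ xᵢBᵢ is positive definite for every x in the interior of S. -/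
/-!
Write `L x = A + ∑ i, x i • B i`. If `L x₀` is singular at an interior point `x₀` of `S`, with
kernel vector `v`, then `L x *ᵥ v = 0` for every `x`, so deleting a coordinate on which `v` does not
vanish yields a smaller representation of `S`; hence, for minimal `d`, `L` is positive definite
and `det L > 0` on the interior of `S`. The connected component `T` of `{det L > 0}` through an
interior point contains the convex set `interior S`, and does not leave `S`, since on `S` the
conditions `det L > 0` and `L ≻ 0` agree, so that `T ∩ S` is open and closed in `T`. Finally
`S = closure (interior S) = closure T`, because `S` is closed and convex with nonempty interior.
-/

open Matrix

/-- `S ⊆ ℝⁿ` is an algebraic interior with defining polynomial `p` if it is the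
closure of a connected component of `{x : p x > 0}`. -/
def IsDefiningPoly {n : ℕ} (S : Set (Fin n → ℝ)) (p : MvPolynomial (Fin n) ℝ) : Prop :=
  ∃ x₀ : Fin n → ℝ, 0 < MvPolynomial.eval x₀ p ∧
    S = closure (connectedComponentIn {x : Fin n → ℝ | 0 < MvPolynomial.eval x p} x₀)

def IsAlgebraicInterior {n : ℕ} (S : Set (Fin n → ℝ)) : Prop :=
  ∃ p : MvPolynomial (Fin n) ℝ, IsDefiningPoly S p

open Topology Filter

namespace Matrix

theorem convex_setOf_posSemidef {n : Type*} :
    Convex ℝ {M : Matrix n n ℝ | M.PosSemidef} :=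
  fun _ hM _ hN _ _ ha hb _ => (hM.smul ha).add (hN.smul hb)

variable {n : Type*} [Fintype n]

theorem isClosed_setOf_posSemidef : IsClosed {M : Matrix n n ℝ | M.PosSemidef} := by
  simp only [posSemidef_iff_dotProduct_mulVec, star_trivial, Set.ofPred_and, Set.ofPred_forall]
  exact (isClosed_eq continuous_id.matrix_conjTranspose continuous_id).inter <|
    isClosed_iInter fun v => isClosed_le continuous_const <|
      continuous_const.dotProduct (continuous_id.matrix_mulVec continuous_const)

theorem isOpen_setOf_forall_dotProduct_mulVec_pos :
    IsOpen {M : Matrix n n ℝ | ∀ v ≠ 0, 0 < v ⬝ᵥ (M *ᵥ v)} := by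
  refine isOpen_iff_mem_nhds.mpr fun M₀ hM₀ => ?_
  have hq : Continuous fun p : Matrix n n ℝ × (n → ℝ) => p.2 ⬝ᵥ (p.1 *ᵥ p.2) :=
    continuous_snd.dotProduct (continuous_fst.matrix_mulVec continuous_snd)
  have hsphere : ∀ᶠ M in 𝓝 M₀, ∀ v ∈ Metric.sphere (0 : n → ℝ) 1, 0 < v ⬝ᵥ (M *ᵥ v) :=
    (isCompact_sphere 0 1).eventually_forall_of_forall_eventually fun v hv =>
      (hq.isOpen_preimage _ isOpen_Ioi).mem_nhds
        (hM₀ v (ne_zero_of_mem_sphere one_ne_zero ⟨v, hv⟩))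
  filter_upwards [hsphere] with M hM v hv
  have hpos := hM (‖v‖⁻¹ • v) (by simp [norm_smul, norm_ne_zero_iff.mpr hv])
  rw [mulVec_smul, dotProduct_smul, smul_dotProduct, smul_smul, smul_eq_mul] at hpos
  exact pos_of_mul_pos_right hpos (by positivity)

theorem PosSemidef.mulVec_eq_zero_of_add {P Q : Matrix n n ℝ} (hP : P.PosSemidef)
    (hQ : Q.PosSemidef) {v : n → ℝ} (h : (P + Q) *ᵥ v = 0) : P *ᵥ v = 0 := by
  have hsum : v ⬝ᵥ (P *ᵥ v) + v ⬝ᵥ (Q *ᵥ v) = 0 := by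
    rw [← dotProduct_add, ← add_mulVec, h, dotProduct_zero]
  have hPv := hP.dotProduct_mulVec_nonneg v
  have hQv := hQ.dotProduct_mulVec_nonneg v
  rw [star_trivial] at hPv hQv
  exact (hP.dotProduct_mulVec_zero_iff v).mp (by rw [star_trivial]; linarith)

theorem dotProduct_mulVec_eq_of_mulVec_eq_zero {N : Matrix n n ℝ} (hN : N.IsSymm)
    {v : n → ℝ} (hv : N *ᵥ v = 0) (u : n → ℝ) (t : ℝ) :
    (u + t • v) ⬝ᵥ (N *ᵥ (u + t • v)) = u ⬝ᵥ (N *ᵥ u) := by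
  have hvu : v ⬝ᵥ (N *ᵥ u) = 0 := by
    rw [dotProduct_mulVec, ← mulVec_transpose, hN.eq, hv, zero_dotProduct]
  simp [mulVec_add, mulVec_smul, hv, add_dotProduct, smul_dotProduct, hvu]

theorem dotProduct_mulVec_submatrix_succAbove {m : ℕ} (N : Matrix (Fin (m + 1)) (Fin (m + 1)) ℝ)
    {k : Fin (m + 1)} {u : Fin (m + 1) → ℝ} (hu : u k = 0) :
    (u ∘ k.succAbove) ⬝ᵥ (N.submatrix k.succAbove k.succAbove *ᵥ (u ∘ k.succAbove)) =
      u ⬝ᵥ (N *ᵥ u) := by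
  simp only [dotProduct, mulVec, Fin.sum_univ_succAbove _ k, hu, zero_mul, mul_zero, zero_add,
    Function.comp_apply, submatrix_apply]

/-- Shifting `u` along the kernel vector `v` kills its `k`-th coordinate and keeps the form. -/
theorem posSemidef_iff_posSemidef_submatrix_succAbove {m : ℕ}
    {N : Matrix (Fin (m + 1)) (Fin (m + 1)) ℝ} (hN : N.IsSymm) {v : Fin (m + 1) → ℝ}
    (hv : N *ᵥ v = 0) {k : Fin (m + 1)} (hk : v k ≠ 0) :
    N.PosSemidef ↔ (N.submatrix k.succAbove k.succAbove).PosSemidef := by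
  refine ⟨fun h => h.submatrix _, fun h => .of_dotProduct_mulVec_nonneg hN fun u => ?_⟩
  have hk0 : (u + (-(u k / v k)) • v) k = 0 := by
    simp [div_mul_cancel₀ _ hk]
  rw [star_trivial, ← dotProduct_mulVec_eq_of_mulVec_eq_zero hN hv u (-(u k / v k)),
    ← dotProduct_mulVec_submatrix_succAbove N hk0]
  simpa using h.dotProduct_mulVec_nonneg _

end Matrix

section Pencil

variable {ι m : Type*} [Fintype ι]

def pencil (A : Matrix m m ℝ) (B : ι → Matrix m m ℝ) (x : ι → ℝ) : Matrix m m ℝ :=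
  A + ∑ i, x i • B i

variable (A : Matrix m m ℝ) (B : ι → Matrix m m ℝ)

theorem pencil_add_smul_sub (x y : ι → ℝ) (t : ℝ) :
    pencil A B (x + t • (y - x)) = pencil A B x + t • (pencil A B y - pencil A B x) := by
  simp only [pencil, Pi.add_apply, Pi.smul_apply, Pi.sub_apply, smul_eq_mul, add_smul, mul_smul,
    sub_smul, Finset.sum_add_distrib, Finset.sum_sub_distrib, ← Finset.smul_sum]
  rw [add_sub_add_left_eq_sub, add_assoc]

theorem continuous_pencil : Continuous (pencil A B) := by
  unfold pencil; fun_prop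

theorem isSymm_pencil (hA : A.IsSymm) (hB : ∀ i, (B i).IsSymm) (x : ι → ℝ) :
    (pencil A B x).IsSymm := by
  simp only [IsSymm, pencil, transpose_add, transpose_sum, transpose_smul, hA.eq, (hB _).eq]

theorem pencil_submatrix {m' : Type*} (e : m' → m) (x : ι → ℝ) :
    pencil (A.submatrix e e) (fun i => (B i).submatrix e e) x = (pencil A B x).submatrix e e := by
  ext
  simp [pencil, Matrix.sum_apply]

theorem convex_setOf_pencil_posSemidef : Convex ℝ {x | (pencil A B x).PosSemidef} := by
  intro x hx y hy a b ha hb hab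
  obtain rfl : a = 1 - b := eq_sub_of_add_eq hab
  have hxy : (1 - b) • x + b • y = x + b • (y - x) := by module
  have hL : (1 - b) • pencil A B x + b • pencil A B y =
      pencil A B x + b • (pencil A B y - pencil A B x) := by module
  rw [Set.mem_ofPred_eq, hxy, pencil_add_smul_sub, ← hL]
  exact convex_setOf_posSemidef hx hy ha hb hab

theorem isClosed_setOf_pencil_posSemidef [Fintype m] :
    IsClosed {x | (pencil A B x).PosSemidef} :=
  isClosed_setOf_posSemidef.preimage (continuous_pencil A B)

theorem isOpen_setOf_pencil_posDef [Fintype m] (hA : A.IsSymm) (hB : ∀ i, (B i).IsSymm) :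
    IsOpen {x | (pencil A B x).PosDef} := by
  have : {x | (pencil A B x).PosDef} =
      pencil A B ⁻¹' {M | ∀ v ≠ 0, 0 < v ⬝ᵥ (M *ᵥ v)} := by
    ext x
    simp [posDef_iff_dotProduct_mulVec, isSymm_pencil A B hA hB x]
  rw [this]
  exact isOpen_setOf_forall_dotProduct_mulVec_pos.preimage (continuous_pencil A B)

/-- For small `t ≠ 0`, the semidefinite matrices `L (x₀ ± t • (x - x₀))` add up to `2 • L x₀`,
which kills `v`; so each of them kills `v`, and `L (x₀ + t • (x - x₀)) *ᵥ v = t • (L x *ᵥ v)`. -/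
theorem pencil_mulVec_eq_zero_of_mem_interior [Fintype m] {x₀ : ι → ℝ}
    (hx₀ : x₀ ∈ interior {x | (pencil A B x).PosSemidef}) {v : m → ℝ}
    (hv : pencil A B x₀ *ᵥ v = 0) (x : ι → ℝ) : pencil A B x *ᵥ v = 0 := by
  have hline : Tendsto (fun t : ℝ => x₀ + t • (x - x₀)) (𝓝 0) (𝓝 x₀) := by
    have : Continuous fun t : ℝ => x₀ + t • (x - x₀) := by fun_prop
    simpa using this.tendsto 0
  have hpsd := hline.eventually (mem_interior_iff_mem_nhds.mp hx₀)
  have hpsd_neg := (continuous_neg.tendsto' (0 : ℝ) 0 neg_zero).eventually hpsd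
  obtain ⟨t, ⟨hpos, hneg⟩, ht⟩ := (((hpsd.and hpsd_neg).filter_mono nhdsWithin_le_nhds).and
    (self_mem_nhdsWithin (s := {(0 : ℝ)}ᶜ))).exists
  have hmid : pencil A B (x₀ + t • (x - x₀)) + pencil A B (x₀ + (-t) • (x - x₀)) =
      (2 : ℝ) • pencil A B x₀ := by
    rw [pencil_add_smul_sub, pencil_add_smul_sub]; module
  have hker := hpos.mulVec_eq_zero_of_add hneg (by rw [hmid, smul_mulVec, hv, smul_zero])
  rw [pencil_add_smul_sub, add_mulVec, hv, zero_add, smul_mulVec, sub_mulVec, hv,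
    sub_zero] at hker
  exact (smul_eq_zero.mp hker).resolve_left ht

end Pencil

theorem exists_smaller_pencil_of_not_posDef {ι : Type*} [Fintype ι] {d : ℕ}
    (A : Matrix (Fin d) (Fin d) ℝ) (B : ι → Matrix (Fin d) (Fin d) ℝ) (hA : A.IsSymm)
    (hB : ∀ i, (B i).IsSymm) {x₀ : ι → ℝ} (hx₀ : x₀ ∈ interior {x | (pencil A B x).PosSemidef})
    (hnd : ¬ (pencil A B x₀).PosDef) :
    ∃ d' < d, ∃ (A' : Matrix (Fin d') (Fin d') ℝ) (B' : ι → Matrix (Fin d') (Fin d') ℝ),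
      A'.IsSymm ∧ (∀ i, (B' i).IsSymm) ∧
        {x | (pencil A' B' x).PosSemidef} = {x | (pencil A B x).PosSemidef} := by
  have hpsd : (pencil A B x₀).PosSemidef :=
    interior_subset (s := {x | (pencil A B x).PosSemidef}) hx₀
  obtain ⟨v, hv0, hv⟩ : ∃ v ≠ 0, pencil A B x₀ *ᵥ v = 0 :=
    exists_mulVec_eq_zero_iff.mpr (not_not.mp (hnd ∘ hpsd.posDef_iff_det_ne_zero.mpr))
  obtain ⟨k, hk⟩ := Function.ne_iff.mp hv0
  obtain ⟨m, rfl⟩ := Nat.exists_eq_add_one_of_ne_zero k.pos.ne'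
  refine ⟨m, m.lt_succ_self, A.submatrix k.succAbove k.succAbove,
    fun i => (B i).submatrix k.succAbove k.succAbove, hA.submatrix _,
    fun i => (hB i).submatrix _, Set.ext fun x => ?_⟩
  rw [Set.mem_ofPred_eq, Set.mem_ofPred_eq, pencil_submatrix]
  exact (posSemidef_iff_posSemidef_submatrix_succAbove (isSymm_pencil A B hA hB x)
    (pencil_mulVec_eq_zero_of_mem_interior A B hx₀ hv x) hk).symm

theorem exists_mvPolynomial_eval_eq_det_pencil {ι m : Type*} [Fintype ι] [Fintype m]
    [DecidableEq m] (A : Matrix m m ℝ) (B : ι → Matrix m m ℝ) :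
    ∃ p : MvPolynomial ι ℝ, ∀ x, MvPolynomial.eval x p = (pencil A B x).det := by
  refine ⟨(Matrix.of fun j l => MvPolynomial.C (A j l) +
    ∑ i, MvPolynomial.X i * MvPolynomial.C (B i j l)).det, fun x => ?_⟩
  rw [RingHom.map_det]
  congr 1
  ext j l
  simp [pencil, Matrix.sum_apply]

theorem Convex.eq_closure_connectedComponentIn {E : Type*} [AddCommGroup E] [Module ℝ E]
    [TopologicalSpace E] [IsTopologicalAddGroup E] [ContinuousSMul ℝ E] {S P U : Set E} {x₀ : E}
    (hconv : Convex ℝ S) (hclosed : IsClosed S) (hU : IsOpen U) (hUS : U ⊆ S)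
    (hSP : interior S ⊆ P) (hPS : P ∩ S ⊆ U) (hx₀ : x₀ ∈ interior S) :
    S = closure (connectedComponentIn P x₀) := by
  have hx₀P : x₀ ∈ P := hSP hx₀
  have hTU : connectedComponentIn P x₀ ⊆ U :=
    isPreconnected_connectedComponentIn.subset_left_of_subset_union hU hclosed.isOpen_compl
      (disjoint_compl_right.mono_left hUS)
      (fun z hz => (em (z ∈ S)).imp (fun hzS => hPS ⟨connectedComponentIn_subset _ _ hz, hzS⟩) id)
      ⟨x₀, mem_connectedComponentIn hx₀P, hPS ⟨hx₀P, interior_subset hx₀⟩⟩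
  refine subset_antisymm ?_ (closure_minimal (hTU.trans hUS) hclosed)
  calc S = closure (interior S) :=
        (hconv.closure_interior_eq_closure_of_nonempty_interior ⟨x₀, hx₀⟩).trans
          hclosed.closure_eq |>.symm
    _ ⊆ closure (connectedComponentIn P x₀) :=
        closure_mono (hconv.interior.isPreconnected.subset_connectedComponentIn hx₀ hSP)

/-- Every spectrahedron with nonempty interior is an algebraic interior; moreover, if the
size `d` of the semidefinite representation is minimal, then the pencil is positive
definite on the interior of `S`. -/
theorem spectrahedron_isAlgebraicInterior (n d : ℕ)
    (A : Matrix (Fin d) (Fin d) ℝ) (B : Fin n → Matrix (Fin d) (Fin d) ℝ)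
    (hA : A.IsSymm) (hB : ∀ i, (B i).IsSymm)
    (S : Set (Fin n → ℝ))
    (hS : S = {x | (A + ∑ i, x i • B i).PosSemidef})
    (hne : (interior S).Nonempty)
    (hmin : ∀ (d' : ℕ) (A' : Matrix (Fin d') (Fin d') ℝ)
      (B' : Fin n → Matrix (Fin d') (Fin d') ℝ), A'.IsSymm → (∀ i, (B' i).IsSymm) →
      S = {x | (A' + ∑ i, x i • B' i).PosSemidef} → d ≤ d') :
    IsAlgebraicInterior S ∧ ∀ x ∈ interior S, (A + ∑ i, x i • B i).PosDef := by
  change S = {x | (pencil A B x).PosSemidef} at hS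
  have hPD : ∀ x ∈ interior S, (pencil A B x).PosDef := by
    intro x hx
    by_contra hnd
    obtain ⟨d', hd', A', B', hA', hB', hrep⟩ :=
      exists_smaller_pencil_of_not_posDef A B hA hB (hS ▸ hx) hnd
    exact (hmin d' A' B' hA' hB' (hS.trans hrep.symm)).not_gt hd'
  obtain ⟨x₀, hx₀⟩ := hne
  obtain ⟨p, hp⟩ := exists_mvPolynomial_eval_eq_det_pencil A B
  refine ⟨⟨p, x₀, by rw [hp]; exact (hPD x₀ hx₀).det_pos, ?_⟩, hPD⟩
  subst hS
  simp only [hp]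
  exact (convex_setOf_pencil_posSemidef A B).eq_closure_connectedComponentIn
    (isClosed_setOf_pencil_posSemidef A B) (isOpen_setOf_pencil_posDef A B hA hB)
    (fun x hx => hx.posSemidef) (fun x hx => (hPD x hx).det_pos)
    (fun x ⟨hpos, hpsd⟩ => hpsd.posDef_iff_det_ne_zero.mpr hpos.ne') hx₀
end

section
/- Let R be a symmetric endomorphism of ∧²ℝ⁴ satisfying the first Bianchi identity. Then the sectional curvature function sec_R is nonnegative (i.e., ⟨R(X∧Y), X∧Y⟩ ≥ 0 for all decomposable unit X∧Y) if and only if there exists x ∈ ℝ such that R + x * is positive semidefinite, where * is the Hodge star operator. -/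
open Matrix

/-- Plücker coordinates of `X ∧ Y ∈ ∧²ℝ⁴` in the ordered basis
`e₁∧e₂, e₁∧e₃, e₁∧e₄, e₂∧e₃, e₂∧e₄, e₃∧e₄`. -/
def wedge (X Y : Fin 4 → ℝ) : Fin 6 → ℝ :=
  ![X 0 * Y 1 - X 1 * Y 0, X 0 * Y 2 - X 2 * Y 0, X 0 * Y 3 - X 3 * Y 0,
    X 1 * Y 2 - X 2 * Y 1, X 1 * Y 3 - X 3 * Y 1, X 2 * Y 3 - X 3 * Y 2]

/-- The Hodge star operator on `∧²ℝ⁴`, in the Plücker basis: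
`⟨*(α), β⟩ = ⟨e₁∧e₂∧e₃∧e₄, α∧β⟩`. -/
def hodgeStar : Matrix (Fin 6) (Fin 6) ℝ :=
  !![0,0,0,0,0,1; 0,0,0,0,-1,0; 0,0,0,1,0,0; 0,0,1,0,0,0; 0,-1,0,0,0,0; 1,0,0,0,0,0]

/-- The first Bianchi identity for an operator on `∧²ℝ⁴`. -/
def Bianchi (R : Matrix (Fin 6) (Fin 6) ℝ) : Prop :=
  ∀ X Y Z W : Fin 4 → ℝ,
    R.mulVec (wedge X Y) ⬝ᵥ wedge Z W + R.mulVec (wedge Y Z) ⬝ᵥ wedge X W +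
      R.mulVec (wedge Z X) ⬝ᵥ wedge Y W = 0

/-!
Let `m t` be the least eigenvalue of `R + t • *`, the minimum of its quadratic form on the unit
sphere. As `*` takes both signs, `m t → -∞` when `|t| → ∞`, so the continuous function `m` has a
maximum at some `t₀`. If `m t₀ < 0`, the unit eigenvectors for `m t₀` can neither all satisfy
`⟨*α, α⟩ > 0` (then increasing `t` would increase `m`) nor all `⟨*α, α⟩ < 0`. So the eigenspace
contains `α`, `β` with `⟨*α, α⟩ ≤ 0 ≤ ⟨*β, β⟩`, hence a nonzero `w` with `⟨*w, w⟩ = 0`. By the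
Plücker relation `w` is decomposable, yet `⟨R w, w⟩ = m t₀ |w|² < 0`.
-/

open Filter

def dotUnitSphere (ι : Type*) [Fintype ι] : Set (ι → ℝ) := {x | x ⬝ᵥ x = 1}

section Sphere

variable {ι : Type*} [Fintype ι]

theorem sq_le_dotProduct_self (x : ι → ℝ) (i : ι) : x i ^ 2 ≤ x ⬝ᵥ x := by
  simpa [dotProduct, sq] using
    Finset.single_le_sum (f := fun j => x j * x j) (fun j _ => mul_self_nonneg _)
      (Finset.mem_univ i)

theorem isCompact_dotUnitSphere : IsCompact (dotUnitSphere ι) := by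
  refine Metric.isCompact_of_isClosed_isBounded
    (isClosed_eq (continuous_id.dotProduct continuous_id) continuous_const) ?_
  refine (Metric.isBounded_iff_subset_closedBall 0).2 ⟨1, fun x hx => ?_⟩
  refine mem_closedBall_zero_iff.2 <| (pi_norm_le_iff_of_nonneg zero_le_one).2 fun i => ?_
  have := sq_le_dotProduct_self x i
  rw [hx.out] at this
  rw [Real.norm_eq_abs, abs_le]
  constructor <;> nlinarith

theorem dotUnitSphere_nonempty [Nonempty ι] : (dotUnitSphere ι).Nonempty := by
  classical
  exact ⟨Pi.single (Classical.arbitrary ι) 1, by simp [dotUnitSphere]⟩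

theorem dotProduct_self_pos {x : ι → ℝ} (hx : x ≠ 0) : 0 < x ⬝ᵥ x := by
  simpa using dotProduct_self_star_pos_iff.2 hx

theorem ne_zero_of_mem_dotUnitSphere {x : ι → ℝ} (hx : x ∈ dotUnitSphere ι) : x ≠ 0 := by
  rintro rfl
  simp [dotUnitSphere] at hx

theorem inv_sqrt_smul_mem_dotUnitSphere {x : ι → ℝ} (hx : x ≠ 0) :
    (√(x ⬝ᵥ x))⁻¹ • x ∈ dotUnitSphere ι := by
  have hpos := dotProduct_self_pos hx
  rw [dotUnitSphere, Set.mem_ofPred_eq, smul_dotProduct, dotProduct_smul, smul_eq_mul,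
    smul_eq_mul, ← mul_assoc, ← mul_inv, Real.mul_self_sqrt hpos.le, inv_mul_cancel₀ hpos.ne']

theorem smul_dotProduct_mulVec_smul (M : Matrix ι ι ℝ) (c : ℝ) (x : ι → ℝ) :
    (c • x) ⬝ᵥ M *ᵥ (c • x) = c ^ 2 * (x ⬝ᵥ M *ᵥ x) := by
  simp only [mulVec_smul, smul_dotProduct, dotProduct_smul, smul_eq_mul]
  ring

theorem continuous_dotProduct_mulVec (M : Matrix ι ι ℝ) :
    Continuous fun x : ι → ℝ => x ⬝ᵥ M *ᵥ x :=
  continuous_id.dotProduct (continuous_const.matrix_mulVec continuous_id)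

/-- For symmetric `M` this is the least eigenvalue of `M` (see `mulVec_eq_sphereInf_smul`). -/
noncomputable def sphereInf (M : Matrix ι ι ℝ) : ℝ :=
  sInf ((fun x => x ⬝ᵥ M *ᵥ x) '' dotUnitSphere ι)

theorem sphereInf_le (M : Matrix ι ι ℝ) {x : ι → ℝ} (hx : x ∈ dotUnitSphere ι) :
    sphereInf M ≤ x ⬝ᵥ M *ᵥ x :=
  csInf_le (isCompact_dotUnitSphere.bddBelow_image (continuous_dotProduct_mulVec M).continuousOn)
    (Set.mem_image_of_mem _ hx)

theorem exists_mem_dotUnitSphere_eq_sphereInf [Nonempty ι] (M : Matrix ι ι ℝ) :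
    ∃ x ∈ dotUnitSphere ι, x ⬝ᵥ M *ᵥ x = sphereInf M :=
  (isCompact_dotUnitSphere.image (continuous_dotProduct_mulVec M)).sInf_mem
    (dotUnitSphere_nonempty.image _)

theorem sphereInf_mul_dotProduct_self_le (M : Matrix ι ι ℝ) (x : ι → ℝ) :
    sphereInf M * (x ⬝ᵥ x) ≤ x ⬝ᵥ M *ᵥ x := by
  rcases eq_or_ne x 0 with rfl | hx
  · simp
  have hpos := dotProduct_self_pos hx
  have := sphereInf_le M (inv_sqrt_smul_mem_dotUnitSphere hx)
  rwa [smul_dotProduct_mulVec_smul, inv_pow, Real.sq_sqrt hpos.le, le_inv_mul_iff₀ hpos,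
    mul_comm] at this

theorem mulVec_eq_sphereInf_smul {M : Matrix ι ι ℝ} (hM : M.IsSymm) {x : ι → ℝ}
    (hx : x ∈ dotUnitSphere ι) (hxM : x ⬝ᵥ M *ᵥ x = sphereInf M) : M *ᵥ x = sphereInf M • x := by
  classical
  have hN : (M - sphereInf M • 1).PosSemidef := by
    refine .of_dotProduct_mulVec_nonneg (by simpa using hM.sub (isSymm_one.smul _)) fun y => ?_
    simpa [sub_mulVec, smul_mulVec] using sphereInf_mul_dotProduct_self_le M y
  have := (hN.dotProduct_mulVec_zero_iff x).1 (by simp [sub_mulVec, smul_mulVec, hxM, hx.out])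
  rwa [sub_mulVec, smul_mulVec, one_mulVec, sub_eq_zero] at this

theorem continuous_sphereInf_add_smul [Nonempty ι] (A H : Matrix ι ι ℝ) :
    Continuous fun t : ℝ => sphereInf (A + t • H) := by
  obtain ⟨C, hC⟩ := isCompact_dotUnitSphere.exists_bound_of_continuousOn
    (continuous_dotProduct_mulVec H).continuousOn
  refine (LipschitzWith.of_le_add_mul' C fun s t => ?_).continuous
  obtain ⟨x, hx, hxt⟩ := exists_mem_dotUnitSphere_eq_sphereInf (A + t • H)
  have hHx : (s - t) * (x ⬝ᵥ H *ᵥ x) ≤ C * dist s t := by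
    rw [Real.dist_eq, mul_comm]
    exact (le_abs_self _).trans <| (abs_mul _ _).trans_le <|
      mul_le_mul_of_nonneg_right (hC x hx) (abs_nonneg _)
  calc sphereInf (A + s • H) ≤ x ⬝ᵥ (A + s • H) *ᵥ x := sphereInf_le _ hx
    _ = x ⬝ᵥ (A + t • H) *ᵥ x + (s - t) * (x ⬝ᵥ H *ᵥ x) := by
      simp only [add_mulVec, smul_mulVec, dotProduct_add, dotProduct_smul, smul_eq_mul]; ring
    _ ≤ sphereInf (A + t • H) + C * dist s t := by rw [hxt]; gcongr

theorem tendsto_sphereInf_add_smul_atBot (A : Matrix ι ι ℝ) {H : Matrix ι ι ℝ} {u : ι → ℝ}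
    (hu : 0 < u ⬝ᵥ H *ᵥ u) : Tendsto (fun t : ℝ => sphereInf (A + t • H)) atBot atBot := by
  have hu0 : u ≠ 0 := by rintro rfl; simp at hu
  have hc : 0 < (√(u ⬝ᵥ u))⁻¹ ^ 2 := by
    have := dotProduct_self_pos hu0
    positivity
  refine tendsto_atBot_mono (fun t => sphereInf_le _ (inv_sqrt_smul_mem_dotUnitSphere hu0)) ?_
  simp only [add_mulVec, smul_mulVec, dotProduct_add, dotProduct_smul, smul_eq_mul,
    smul_dotProduct_mulVec_smul]
  exact tendsto_atBot_add_const_left _ _ (tendsto_id.atBot_mul_const (mul_pos hc hu))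

theorem tendsto_sphereInf_add_smul_cocompact (A : Matrix ι ι ℝ) {H : Matrix ι ι ℝ}
    {u v : ι → ℝ} (hu : 0 < u ⬝ᵥ H *ᵥ u) (hv : v ⬝ᵥ H *ᵥ v < 0) :
    Tendsto (fun t : ℝ => sphereInf (A + t • H)) (cocompact ℝ) atBot := by
  rw [cocompact_eq_atBot_atTop, tendsto_sup]
  refine ⟨tendsto_sphereInf_add_smul_atBot A hu, ?_⟩
  have hv' : 0 < v ⬝ᵥ (-H) *ᵥ v := by simpa [neg_mulVec] using hv
  refine ((tendsto_sphereInf_add_smul_atBot A hv').comp tendsto_neg_atTop_atBot).congr fun t => ?_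
  simp

theorem exists_pos_sphereInf_lt_sphereInf_add_smul [Nonempty ι] {T H : Matrix ι ι ℝ}
    (hTH : ∀ x ∈ dotUnitSphere ι, x ⬝ᵥ T *ᵥ x = sphereInf T → 0 < x ⬝ᵥ H *ᵥ x) :
    ∃ s : ℝ, 0 < s ∧ sphereInf T < sphereInf (T + s • H) := by
  set m := sphereInf T
  -- `G ≥ G x₀ > 0` on the sphere: away from the minimizers of `T` its form exceeds `m`,
  -- near them `H` is positive.
  set G : (ι → ℝ) → ℝ := fun x => max (x ⬝ᵥ T *ᵥ x - m) (x ⬝ᵥ H *ᵥ x)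
  obtain ⟨x₀, hx₀, hG⟩ : ∃ x₀ ∈ dotUnitSphere ι, IsMinOn G (dotUnitSphere ι) x₀ :=
    isCompact_dotUnitSphere.exists_isMinOn dotUnitSphere_nonempty
    (((continuous_dotProduct_mulVec T).sub continuous_const).max
      (continuous_dotProduct_mulVec H)).continuousOn
  have hc : 0 < G x₀ := by
    rcases (sphereInf_le T hx₀).eq_or_lt with h | h
    · exact lt_max_of_lt_right (hTH x₀ hx₀ h.symm)
    · exact lt_max_of_lt_left (sub_pos.2 h)
  obtain ⟨K, hK⟩ := isCompact_dotUnitSphere.exists_bound_of_continuousOn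
    (continuous_dotProduct_mulVec H).continuousOn
  have hK0 : 0 ≤ K := (norm_nonneg _).trans (hK x₀ hx₀)
  set s := G x₀ / (K + 1)
  have hs : 0 < s := by positivity
  refine ⟨s, hs, ?_⟩
  obtain ⟨y, hy, hym⟩ := exists_mem_dotUnitSphere_eq_sphereInf (T + s • H)
  rw [← hym]
  simp only [add_mulVec, smul_mulVec, dotProduct_add, dotProduct_smul, smul_eq_mul]
  have hGy : G x₀ ≤ G y := hG hy
  rcases le_max_iff.1 hGy with h | h
  · have hsK : s * K < G x₀ := by
      rw [div_mul_eq_mul_div, div_lt_iff₀ (by positivity)]; linarith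
    have := mul_le_mul_of_nonneg_left
      (neg_le_of_abs_le ((Real.norm_eq_abs _).symm.trans_le (hK y hy))) hs.le
    linarith
  · linarith [sphereInf_le T hy, mul_pos hs (hc.trans_le h)]

theorem exists_ne_zero_dotProduct_mulVec_eq_zero {H : Matrix ι ι ℝ} {α β : ι → ℝ}
    (hα0 : α ≠ 0) (hβ0 : β ≠ 0) (hα : α ⬝ᵥ H *ᵥ α ≤ 0) (hβ : 0 ≤ β ⬝ᵥ H *ᵥ β) :
    ∃ p q : ℝ, p • α + q • β ≠ 0 ∧ (p • α + q • β) ⬝ᵥ H *ᵥ (p • α + q • β) = 0 := by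
  rcases hα.eq_or_lt with hα | hα
  · exact ⟨1, 0, by simpa using hα0, by simpa using hα⟩
  rcases hβ.eq_or_lt with hβ | hβ
  · exact ⟨0, 1, by simpa using hβ0, by simpa using hβ.symm⟩
  set b := α ⬝ᵥ H *ᵥ β + β ⬝ᵥ H *ᵥ α
  have hexp (s : ℝ) : (α + s • β) ⬝ᵥ H *ᵥ (α + s • β) =
      (β ⬝ᵥ H *ᵥ β) * (s * s) + b * s + α ⬝ᵥ H *ᵥ α := by
    simp only [b, mulVec_add, mulVec_smul, add_dotProduct, dotProduct_add, smul_dotProduct,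
      dotProduct_smul, smul_eq_mul]
    ring
  obtain ⟨s, hs⟩ := exists_quadratic_eq_zero hβ.ne'
    ⟨√(discrim (β ⬝ᵥ H *ᵥ β) b (α ⬝ᵥ H *ᵥ α)),
      (Real.mul_self_sqrt (by rw [discrim]; nlinarith [sq_nonneg b])).symm⟩
  refine ⟨1, s, fun h => ?_, by rw [one_smul, hexp, hs]⟩
  have : α = (-s) • β := by rw [neg_smul, eq_neg_iff_add_eq_zero, ← one_smul ℝ α, h]
  rw [this, smul_dotProduct_mulVec_smul] at hα
  nlinarith [sq_nonneg s]

theorem exists_isotropic_mulVec_eq_sphereInf_smul {T H : Matrix ι ι ℝ} (hT : T.IsSymm)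
    {α β : ι → ℝ} (hα : α ∈ dotUnitSphere ι) (hβ : β ∈ dotUnitSphere ι)
    (hαT : α ⬝ᵥ T *ᵥ α = sphereInf T) (hβT : β ⬝ᵥ T *ᵥ β = sphereInf T)
    (hαH : α ⬝ᵥ H *ᵥ α ≤ 0) (hβH : 0 ≤ β ⬝ᵥ H *ᵥ β) :
    ∃ w ≠ 0, w ⬝ᵥ H *ᵥ w = 0 ∧ T *ᵥ w = sphereInf T • w := by
  obtain ⟨p, q, hw0, hwH⟩ := exists_ne_zero_dotProduct_mulVec_eq_zero
    (ne_zero_of_mem_dotUnitSphere hα) (ne_zero_of_mem_dotUnitSphere hβ) hαH hβH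
  refine ⟨_, hw0, hwH, ?_⟩
  simp only [mulVec_add, mulVec_smul, mulVec_eq_sphereInf_smul hT hα hαT,
    mulVec_eq_sphereInf_smul hT hβ hβT]
  module

theorem dotProduct_mulVec_nonneg_of_isotropic {A H : Matrix ι ι ℝ}
    (hAH : ∀ x ∈ dotUnitSphere ι, x ⬝ᵥ H *ᵥ x = 0 → 0 ≤ x ⬝ᵥ A *ᵥ x) {x : ι → ℝ}
    (hx : x ⬝ᵥ H *ᵥ x = 0) : 0 ≤ x ⬝ᵥ A *ᵥ x := by
  rcases eq_or_ne x 0 with rfl | hx0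
  · simp
  have := hAH _ (inv_sqrt_smul_mem_dotUnitSphere hx0)
    (by rw [smul_dotProduct_mulVec_smul, hx, mul_zero])
  have hc : 0 < (√(x ⬝ᵥ x))⁻¹ ^ 2 := by have := dotProduct_self_pos hx0; positivity
  rwa [smul_dotProduct_mulVec_smul, mul_nonneg_iff_of_pos_left hc] at this

theorem exists_posSemidef_add_smul_of_isotropic_nonneg {A H : Matrix ι ι ℝ} (hA : A.IsSymm)
    (hH : H.IsSymm) {u v : ι → ℝ} (hu : 0 < u ⬝ᵥ H *ᵥ u) (hv : v ⬝ᵥ H *ᵥ v < 0)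
    (hAH : ∀ x ∈ dotUnitSphere ι, x ⬝ᵥ H *ᵥ x = 0 → 0 ≤ x ⬝ᵥ A *ᵥ x) :
    ∃ t : ℝ, (A + t • H).PosSemidef := by
  have : Nonempty ι := by
    obtain ⟨i, -⟩ := Function.ne_iff.1 (show u ≠ 0 by rintro rfl; simp at hu)
    exact ⟨i⟩
  obtain ⟨t₀, ht₀⟩ := (continuous_sphereInf_add_smul A H).exists_forall_ge
    (tendsto_sphereInf_add_smul_cocompact A hu hv)
  set T := A + t₀ • H
  have hT : T.IsSymm := hA.add (hH.smul t₀)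
  by_cases hm : 0 ≤ sphereInf T
  · refine ⟨t₀, .of_dotProduct_mulVec_nonneg (by simpa using hT) fun x => ?_⟩
    simpa using (mul_nonneg hm (by simpa using dotProduct_star_self_nonneg x)).trans
      (sphereInf_mul_dotProduct_self_le T x)
  exfalso
  have hmax (s : ℝ) : sphereInf (T + s • H) ≤ sphereInf T := by
    simpa [T, add_smul, add_assoc] using ht₀ (t₀ + s)
  by_cases hpos : ∀ x ∈ dotUnitSphere ι, x ⬝ᵥ T *ᵥ x = sphereInf T → 0 < x ⬝ᵥ H *ᵥ x
  · obtain ⟨s, -, hs⟩ := exists_pos_sphereInf_lt_sphereInf_add_smul hpos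
    exact (hmax s).not_gt hs
  by_cases hneg : ∀ x ∈ dotUnitSphere ι, x ⬝ᵥ T *ᵥ x = sphereInf T → 0 < x ⬝ᵥ (-H) *ᵥ x
  · obtain ⟨s, -, hs⟩ := exists_pos_sphereInf_lt_sphereInf_add_smul hneg
    exact (hmax (-s)).not_gt (by simpa using hs)
  push Not at hpos hneg
  obtain ⟨α, hα, hαT, hαH⟩ := hpos
  obtain ⟨β, hβ, hβT, hβH⟩ := hneg
  obtain ⟨w, hw0, hwH, hTw⟩ := exists_isotropic_mulVec_eq_sphereInf_smul hT hα hβ hαT hβT hαH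
    (by simpa [neg_mulVec] using hβH)
  have hAw : w ⬝ᵥ A *ᵥ w = sphereInf T * (w ⬝ᵥ w) := by
    simpa [T, hwH, add_mulVec, smul_mulVec] using congrArg (w ⬝ᵥ ·) hTw
  exact (dotProduct_mulVec_nonneg_of_isotropic hAH hwH).not_gt
    (hAw ▸ mul_neg_of_neg_of_pos (not_le.1 hm) (dotProduct_self_pos hw0))

end Sphere

theorem dotProduct_hodgeStar_mulVec (γ : Fin 6 → ℝ) :
    γ ⬝ᵥ hodgeStar *ᵥ γ = 2 * (γ 0 * γ 5 - γ 1 * γ 4 + γ 2 * γ 3) := by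
  simp [hodgeStar, dotProduct, mulVec, Fin.sum_univ_six]
  ring

theorem wedge_dotProduct_hodgeStar_mulVec (X Y : Fin 4 → ℝ) :
    wedge X Y ⬝ᵥ hodgeStar *ᵥ wedge X Y = 0 := by
  rw [dotProduct_hodgeStar_mulVec]
  simp [wedge]
  ring

theorem isSymm_hodgeStar : hodgeStar.IsSymm := by
  ext i j
  fin_cases i <;> fin_cases j <;> rfl

theorem exists_wedge_eq_of_dotProduct_hodgeStar_mulVec_eq_zero {γ : Fin 6 → ℝ}
    (hγ : γ ⬝ᵥ hodgeStar *ᵥ γ = 0) : ∃ X Y : Fin 4 → ℝ, wedge X Y = γ := by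
  obtain ⟨a, b, c, d, e, f, rfl⟩ : ∃ a b c d e f : ℝ, γ = ![a, b, c, d, e, f] :=
    ⟨_, _, _, _, _, _, by ext i; fin_cases i <;> rfl⟩
  have hP : a * f - b * e + c * d = 0 := by
    rw [dotProduct_hodgeStar_mulVec] at hγ
    simpa using hγ
  by_cases hy : a ^ 2 + b ^ 2 + c ^ 2 = 0
  · obtain ⟨rfl, rfl, rfl⟩ : a = 0 ∧ b = 0 ∧ c = 0 := by
      refine ⟨?_, ?_, ?_⟩ <;> nlinarith [sq_nonneg a, sq_nonneg b, sq_nonneg c]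
    by_cases hd : d = 0
    · subst hd
      exact ⟨![0, e, f, 0], ![0, 0, 0, 1], by ext i; fin_cases i <;> simp [wedge]⟩
    · refine ⟨![0, 1, 0, -f / d], ![0, 0, d, e], ?_⟩
      ext i; fin_cases i <;> simp [wedge]
      field_simp
  · -- In the coordinates `e₂, e₃, e₄` put `y = (a, b, c)`, `n = (f, -e, d)`, `z = (y × n) / |y|²`;
    -- then `X = e₁ + z`, `Y = y` works, as `z × y = n` by the Plücker relation `y ⬝ n = 0`.
    refine ⟨![1, (b * d + c * e) / (a ^ 2 + b ^ 2 + c ^ 2),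
      (c * f - a * d) / (a ^ 2 + b ^ 2 + c ^ 2), -(a * e + b * f) / (a ^ 2 + b ^ 2 + c ^ 2)],
      ![0, a, b, c], ?_⟩
    ext i; fin_cases i <;> simp [wedge] <;> field_simp
    · linear_combination -c * hP
    · linear_combination b * hP
    · linear_combination -a * hP

theorem thorpe_trick_general (R : Matrix (Fin 6) (Fin 6) ℝ) (hsymm : R.IsSymm) :
    (∀ X Y : Fin 4 → ℝ, wedge X Y ⬝ᵥ wedge X Y = 1 →
      0 ≤ R.mulVec (wedge X Y) ⬝ᵥ wedge X Y) ↔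
    ∃ x : ℝ, (R + x • hodgeStar).PosSemidef := by
  constructor
  · intro hsec
    refine exists_posSemidef_add_smul_of_isotropic_nonneg hsymm isSymm_hodgeStar
      (u := ![1, 0, 0, 0, 0, 1]) (v := ![1, 0, 0, 0, 0, -1])
      (by rw [dotProduct_hodgeStar_mulVec]; simp) (by rw [dotProduct_hodgeStar_mulVec]; simp)
      fun γ hγ hγH => ?_
    obtain ⟨X, Y, rfl⟩ := exists_wedge_eq_of_dotProduct_hodgeStar_mulVec_eq_zero hγH
    rw [dotProduct_comm]
    exact hsec X Y hγ
  · rintro ⟨x, hx⟩ X Y -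
    have := hx.dotProduct_mulVec_nonneg (wedge X Y)
    rwa [star_trivial, add_mulVec, smul_mulVec, dotProduct_add, dotProduct_smul,
      wedge_dotProduct_hodgeStar_mulVec, smul_zero, add_zero, dotProduct_comm] at this

/-- **Thorpe's trick**: a symmetric endomorphism `R` of `∧²ℝ⁴` satisfying the first
Bianchi identity has `sec_R ≥ 0` (i.e. `⟨R(X∧Y), X∧Y⟩ ≥ 0` for all decomposable unit
`X∧Y`) if and only if `R + x *` is positive semidefinite for some `x ∈ ℝ`. -/
theorem thorpe_trick (R : Matrix (Fin 6) (Fin 6) ℝ) (hsymm : R.IsSymm)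
    (hb : Bianchi R) :
    (∀ X Y : Fin 4 → ℝ, wedge X Y ⬝ᵥ wedge X Y = 1 →
      0 ≤ R.mulVec (wedge X Y) ⬝ᵥ wedge X Y) ↔
    ∃ x : ℝ, (R + x • hodgeStar).PosSemidef :=
  thorpe_trick_general R hsymm
end

section
/- Let R ∈ Sym²(ℝ⁶) and * = diag(Id₃, −Id₃). If there exists x ∈ ℝ with R + x* positive semidefinite, then the polynomial t ↦ det(R + t*) has only real roots (counted with multiplicity, over ℂ). -/
/-!
Shift the pencil so that its constant term `M = R + x *` is positive semidefinite. If
`(M + s *) v = 0` with `v ≠ 0` and `s ∈ ℂ`, pairing with `v̄` gives `v̄ᵀMv + s · v̄ᵀ*v = 0`, where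
both forms are real because `M` and `*` are Hermitian. So `s` is real unless `v̄ᵀ*v = 0`; but then
also `v̄ᵀMv = 0`, which for semidefinite `M` forces `Mv = 0`, whence `s • *v = 0` with `*v ≠ 0`.
-/

open Matrix Polynomial

/-- The Hodge star on `ℝ⁶` in the self-dual/anti-self-dual splitting. -/
noncomputable def starSD : Matrix (Fin 6) (Fin 6) ℝ := diagonal ![1, 1, 1, -1, -1, -1]

open scoped ComplexOrder MatrixOrder

namespace Matrix

variable {n : Type*} [Fintype n] [DecidableEq n]

theorem PosSemidef.map_ofReal {A : Matrix n n ℝ} (hA : A.PosSemidef) :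
    (A.map Complex.ofReal).PosSemidef := by
  obtain ⟨B, rfl⟩ := CStarAlgebra.nonneg_iff_eq_star_mul_self.mp hA.nonneg
  have hmap : (star B * B).map Complex.ofReal = (B.map Complex.ofReal)ᴴ * B.map Complex.ofReal := by
    ext i j
    simp [mul_apply]
  rw [hmap]
  exact posSemidef_conjTranspose_mul_self _

theorem im_eq_zero_of_det_add_smul_eq_zero {M D : Matrix n n ℂ} (hM : M.PosSemidef)
    (hD : D.IsHermitian) (hDdet : D.det ≠ 0) {s : ℂ} (h : (M + s • D).det = 0) :
    s.im = 0 := by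
  obtain ⟨v, hv, hker⟩ := exists_mulVec_eq_zero_iff.mpr h
  set q := star v ⬝ᵥ M *ᵥ v
  set d := star v ⬝ᵥ D *ᵥ v
  have hqd : q + s * d = 0 := by
    simpa [q, d, add_mulVec, smul_mulVec] using congrArg (star v ⬝ᵥ ·) hker
  have hq : q.im = 0 := hM.isHermitian.im_star_dotProduct_mulVec_self v
  have hd : d.im = 0 := hD.im_star_dotProduct_mulVec_self v
  by_cases hd0 : d = 0
  · have hMv : M *ᵥ v = 0 := (hM.dotProduct_mulVec_zero_iff v).mp (by simpa [hd0] using hqd)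
    have hDv : D *ᵥ v ≠ 0 := fun h0 ↦
      hv <| mulVec_injective_iff_isUnit.mpr ((isUnit_iff_isUnit_det D).mpr hDdet.isUnit) <| by
        simpa using h0
    have hsDv : s • D *ᵥ v = 0 := by simpa [add_mulVec, smul_mulVec, hMv] using hker
    simp [(smul_eq_zero.mp hsDv).resolve_right hDv]
  · have hs : s = -q / d := by rw [eq_div_iff hd0]; linear_combination hqd
    simp [hs, Complex.div_im, hq, hd]

theorem eval_map_det_pencil (A B : Matrix n n ℝ) (z : ℂ) :
    ((A.map C + (X : ℝ[X]) • B.map C).det.map (algebraMap ℝ ℂ)).eval z =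
      (A.map Complex.ofReal + z • B.map Complex.ofReal).det := by
  rw [eval_map, ← coe_eval₂RingHom, RingHom.map_det]
  congr 1
  ext i j
  simp only [RingHom.mapMatrix_apply, coe_eval₂RingHom, map_apply, Matrix.add_apply,
    Matrix.smul_apply, smul_eq_mul, eval₂_add, eval₂_mul, eval₂_C, eval₂_X, Complex.coe_algebraMap]

theorem roots_det_pencil_im_eq_zero {A B : Matrix n n ℝ} (hB : B.IsHermitian)
    (hBdet : B.det ≠ 0) {x : ℝ} (hx : (A + x • B).PosSemidef) :
    ∀ z ∈ ((A.map C + (X : ℝ[X]) • B.map C).det.map (algebraMap ℝ ℂ)).roots, z.im = 0 := by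
  intro z hz
  have hdet : ((A + x • B).map Complex.ofReal + (z - (x : ℂ)) • B.map Complex.ofReal).det = 0 := by
    rw [← (mem_roots'.mp hz).2.eq_zero, eval_map_det_pencil]
    congr 1
    ext i j
    simp only [Matrix.add_apply, map_apply, Matrix.smul_apply, smul_eq_mul, Complex.ofReal_add,
      Complex.ofReal_mul]
    ring
  have hB' : (B.map Complex.ofReal).IsHermitian := hB.map _ fun r ↦ by simp
  have hBdet' : (B.map Complex.ofReal).det ≠ 0 := by
    have hcast : (B.det : ℂ) = (B.map Complex.ofReal).det := Complex.ofRealHom.map_det B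
    exact hcast ▸ Complex.ofReal_ne_zero.mpr hBdet
  simpa using im_eq_zero_of_det_add_smul_eq_zero hx.map_ofReal hB' hBdet' hdet

end Matrix

theorem starSD_isHermitian : starSD.IsHermitian := isHermitian_diagonal _

theorem det_starSD : starSD.det = -1 := by
  simp [starSD, Fin.prod_univ_succ]

theorem detPencil_real_rooted_general (R : Matrix (Fin 6) (Fin 6) ℝ)
    (hx : ∃ x : ℝ, (R + x • starSD).PosSemidef) :
    ∀ z ∈ (((R.map Polynomial.C +
        (Polynomial.X : Polynomial ℝ) • starSD.map Polynomial.C).det).map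
          (algebraMap ℝ ℂ)).roots, z.im = 0 := by
  obtain ⟨x, hx⟩ := hx
  exact roots_det_pencil_im_eq_zero starSD_isHermitian (by norm_num [det_starSD]) hx

/-- If `R ∈ Sym²(ℝ⁶)` and `R + x *` is positive semidefinite for some `x ∈ ℝ`, then the
polynomial `t ↦ det(R + t *)` has only real roots (over `ℂ`). -/
theorem detPencil_real_rooted (R : Matrix (Fin 6) (Fin 6) ℝ) (hsymm : R.IsSymm)
    (hx : ∃ x : ℝ, (R + x • starSD).PosSemidef) :
    ∀ z ∈ (((R.map Polynomial.C +
        (Polynomial.X : Polynomial ℝ) • starSD.map Polynomial.C).det).map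
          (algebraMap ℝ ℂ)).roots, z.im = 0 :=
  detPencil_real_rooted_general R hx
end
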